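/- arXiv:quant-ph/0204095 — 9 statements merged into one kernel-verified Lean document; each statement's English description precedes it below -/
import Mathlib

section
/- Let Σ₁, Σ₂ be sets with orthogonality relations ⊥₁, ⊥₂, and let # be the relation on Σ = Σ₁ × Σ₂ given by p # q ⇔ p₁ ⊥₁ q₁ or p₂ ⊥₂ q₂. Then # is itself an orthogonality relation on Σ, i.e. it is anti-reflexive, symmetric, and satisfies {p}^{##} = {p} for all p ∈ Σ. -/
open Set

/-- For a binary relation `R` on `α` and `a ⊆ α`, the set `a^⊥ = {q : q ⊥ p for all p ∈ a}`. -/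
def pol {α : Type*} (R : α → α → Prop) (a : Set α) : Set α := {q | ∀ p ∈ a, R q p}

/-- An orthogonality relation: anti-reflexive, symmetric, singletons biorthogonally closed. -/
def IsOrthRel {α : Type*} (R : α → α → Prop) : Prop :=
  (∀ p, ¬ R p p) ∧ (∀ p q, R p q → R q p) ∧ ∀ p : α, pol R (pol R {p}) = {p}

/-- A p-lattice on `α`: contains `∅`, `univ`, all singletons, closed under arbitrary
intersections. -/
def IsPLattice {α : Type*} (L : Set (Set α)) : Prop :=
  ∅ ∈ L ∧ Set.univ ∈ L ∧ (∀ S ⊆ L, ⋂₀ S ∈ L) ∧ ∀ p : α, {p} ∈ L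

/-- The join (closure) of a subset `s` in a p-lattice `L`: the intersection of all members of
`L` containing `s`. -/
def cl {α : Type*} (L : Set (Set α)) (s : Set α) : Set α := ⋂₀ {c ∈ L | s ⊆ c}

/-- The separated-product relation `#` on `α × β`: `p # q ↔ p₁ ⊥₁ q₁ or p₂ ⊥₂ q₂`. -/
def sharp {α β : Type*} (R1 : α → α → Prop) (R2 : β → β → Prop) :
    α × β → α × β → Prop := fun p q => R1 p.1 q.1 ∨ R2 p.2 q.2

/-- the separated-product relation `#` of two orthogonality relations is an
orthogonality relation on the product. -/
theorem stmt2 {σ1 σ2 : Type*} (R1 : σ1 → σ1 → Prop) (R2 : σ2 → σ2 → Prop)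
    (h1 : IsOrthRel R1) (h2 : IsOrthRel R2) :
    IsOrthRel (sharp R1 R2) := by
  obtain ⟨ir1, sy1, bi1⟩ := h1
  obtain ⟨ir2, sy2, bi2⟩ := h2
  refine ⟨?_, ?_, ?_⟩
  · rintro p (h | h)
    exacts [ir1 _ h, ir2 _ h]
  · rintro p q (h | h)
    exacts [Or.inl (sy1 _ _ h), Or.inr (sy2 _ _ h)]
  · intro p
    ext q
    simp only [pol, sharp, Set.mem_setOf_eq, Set.mem_singleton_iff]
    constructor
    · intro hq
      have hq1 : q.1 = p.1 := by
        have : q.1 ∈ pol R1 (pol R1 {p.1}) := by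
          intro r hr
          rcases hq (r, q.2) (fun x hx => by
            cases hx; exact Or.inl (hr p.1 rfl)) with h | h
          · exact h
          · exact absurd h (ir2 _)
        rwa [bi1, Set.mem_singleton_iff] at this
      have hq2 : q.2 = p.2 := by
        have : q.2 ∈ pol R2 (pol R2 {p.2}) := by
          intro r hr
          rcases hq (q.1, r) (fun x hx => by
            cases hx; exact Or.inr (hr p.2 rfl)) with h | h
          · exact absurd h (ir1 _)
          · exact h
        rwa [bi2, Set.mem_singleton_iff] at this
      exact Prod.ext hq1 hq2
    · rintro rfl r hr
      rcases hr q rfl with h | h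
      exacts [Or.inl (sy1 _ _ h), Or.inr (sy2 _ _ h)]
end

section
/- Let Σ₁, Σ₂ be sets with orthogonality relations and let L₁⊘L₂ := {a ⊆ Σ₁×Σ₂ : a^{##} = a} be the separated product, where p # q ⇔ p₁ ⊥₁ q₁ or p₂ ⊥₂ q₂. Then for any subsets a₁ ⊆ Σ₁, a₂ ⊆ Σ₂: (a₁ × Σ₂)^{##} = a₁^{⊥₁⊥₁} × Σ₂, and [(a₁ × Σ₂) ∪ (Σ₁ × a₂)]^{##} = (a₁^{⊥₁⊥₁} × Σ₂) ∪ (Σ₁ × a₂^{⊥₂⊥₂}). -/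
open Set

lemma pol_left {α β : Type*} (R1 : α → α → Prop) (R2 : β → β → Prop)
    (irr2 : ∀ p, ¬ R2 p p) (a : Set α) :
    pol (sharp R1 R2) (a ×ˢ (univ : Set β)) = (pol R1 a) ×ˢ (univ : Set β) := by
  ext q
  simp only [pol, sharp, Set.mem_setOf_eq, Set.mem_prod, Set.mem_univ, and_true]
  constructor
  · intro h p1 hp1
    rcases h (p1, q.2) hp1 with h' | h'
    · exact h'
    · exact absurd h' (irr2 q.2)
  · intro h p hp
    exact Or.inl (h p.1 hp)

lemma pol_right {α β : Type*} (R1 : α → α → Prop) (R2 : β → β → Prop)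
    (irr1 : ∀ p, ¬ R1 p p) (a : Set β) :
    pol (sharp R1 R2) ((univ : Set α) ×ˢ a) = (univ : Set α) ×ˢ (pol R2 a) := by
  ext q
  simp only [pol, sharp, Set.mem_setOf_eq, Set.mem_prod, Set.mem_univ, true_and]
  constructor
  · intro h p2 hp2
    rcases h (q.1, p2) hp2 with h' | h'
    · exact absurd h' (irr1 q.1)
    · exact h'
  · intro h p hp
    exact Or.inr (h p.2 hp)

lemma pol_union {α : Type*} (R : α → α → Prop) (s t : Set α) :
    pol R (s ∪ t) = pol R s ∩ pol R t := by
  ext q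
  simp only [pol, Set.mem_setOf_eq, Set.mem_inter_iff, Set.mem_union]
  constructor
  · exact fun h => ⟨fun p hp => h p (Or.inl hp), fun p hp => h p (Or.inr hp)⟩
  · rintro ⟨h1, h2⟩ p (hp | hp)
    · exact h1 p hp
    · exact h2 p hp

lemma pol_prod {α β : Type*} (R1 : α → α → Prop) (R2 : β → β → Prop)
    (b1 : Set α) (b2 : Set β) :
    pol (sharp R1 R2) (b1 ×ˢ b2) =
      ((pol R1 b1) ×ˢ (univ : Set β)) ∪ ((univ : Set α) ×ˢ (pol R2 b2)) := by
  ext q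
  simp only [pol, sharp, Set.mem_setOf_eq, Set.mem_union, Set.mem_prod, Set.mem_univ,
    and_true, true_and]
  constructor
  · intro h
    by_cases hc : ∀ p1 ∈ b1, R1 q.1 p1
    · exact Or.inl hc
    · push_neg at hc
      obtain ⟨p1, hp1, hnr⟩ := hc
      refine Or.inr fun p2 hp2 => ?_
      rcases h (p1, p2) ⟨hp1, hp2⟩ with h' | h'
      · exact absurd h' hnr
      · exact h'
  · rintro (h | h) p hp
    · exact Or.inl (h p.1 hp.1)
    · exact Or.inr (h p.2 hp.2)

/-- in the separated product, for any `a₁ ⊆ Σ₁`, `a₂ ⊆ Σ₂`: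
`(a₁ × Σ₂)^{##} = a₁^{⊥₁⊥₁} × Σ₂` and
`[(a₁ × Σ₂) ∪ (Σ₁ × a₂)]^{##} = (a₁^{⊥₁⊥₁} × Σ₂) ∪ (Σ₁ × a₂^{⊥₂⊥₂})`. -/
theorem stmt4 {σ1 σ2 : Type*} (R1 : σ1 → σ1 → Prop) (R2 : σ2 → σ2 → Prop)
    (h1 : IsOrthRel R1) (h2 : IsOrthRel R2) (a1 : Set σ1) (a2 : Set σ2) :
    pol (sharp R1 R2) (pol (sharp R1 R2) (a1 ×ˢ (univ : Set σ2))) =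
      (pol R1 (pol R1 a1)) ×ˢ (univ : Set σ2) ∧
    pol (sharp R1 R2) (pol (sharp R1 R2)
        ((a1 ×ˢ (univ : Set σ2)) ∪ ((univ : Set σ1) ×ˢ a2))) =
      ((pol R1 (pol R1 a1)) ×ˢ (univ : Set σ2)) ∪
        ((univ : Set σ1) ×ˢ (pol R2 (pol R2 a2))) := by
  constructor
  · rw [pol_left R1 R2 h2.1, pol_left R1 R2 h2.1]
  · rw [pol_union, pol_left R1 R2 h2.1, pol_right R1 R2 h1.1,
      Set.prod_inter_prod, Set.inter_univ, Set.univ_inter, pol_prod]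
end

section
/- Let L₁, L₂ be p-lattices on Σ₁, Σ₂ and let L be a p-lattice on Σ = Σ₁ × Σ₂ satisfying P2: (a₁ × Σ₂) ∪ (Σ₁ × a₂) ∈ L for all a₁ ∈ L₁, a₂ ∈ L₂. Then for any two points p, q ∈ Σ with p₁ ≠ q₁ and p₂ ≠ q₂, the join of {p} and {q} in L equals the two-element set {p, q}. -/
open Set

/-- if the p-lattice `L` on `Σ₁ × Σ₂` satisfies P2, then for points `p`, `q`
with `p₁ ≠ q₁` and `p₂ ≠ q₂`, the join of `{p}` and `{q}` in `L` is the set `{p, q}`. -/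
theorem stmt6 {σ1 σ2 : Type*} (L1 : Set (Set σ1)) (L2 : Set (Set σ2))
    (L : Set (Set (σ1 × σ2)))
    (hL1 : IsPLattice L1) (hL2 : IsPLattice L2) (hL : IsPLattice L)
    (hP2 : ∀ a1 ∈ L1, ∀ a2 ∈ L2,
      (a1 ×ˢ (univ : Set σ2)) ∪ ((univ : Set σ1) ×ˢ a2) ∈ L)
    (p q : σ1 × σ2) (h1 : p.1 ≠ q.1) (h2 : p.2 ≠ q.2) :
    cl L ({p} ∪ {q}) = {p, q} := by
  have hA : (({p.1} : Set σ1) ×ˢ (univ : Set σ2)) ∪ ((univ : Set σ1) ×ˢ ({q.2} : Set σ2)) ∈ L :=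
    hP2 _ (hL1.2.2.2 p.1) _ (hL2.2.2.2 q.2)
  have hB : (({q.1} : Set σ1) ×ˢ (univ : Set σ2)) ∪ ((univ : Set σ1) ×ˢ ({p.2} : Set σ2)) ∈ L :=
    hP2 _ (hL1.2.2.2 q.1) _ (hL2.2.2.2 p.2)
  apply subset_antisymm
  · intro x hx
    have hxA := hx _ ⟨hA, by
      rintro y (rfl | rfl)
      · exact Or.inl ⟨rfl, trivial⟩
      · exact Or.inr ⟨trivial, rfl⟩⟩
    have hxB := hx _ ⟨hB, by
      rintro y (rfl | rfl)
      · exact Or.inr ⟨trivial, rfl⟩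
      · exact Or.inl ⟨rfl, trivial⟩⟩
    rcases hxA with ⟨ha, -⟩ | ⟨-, ha⟩ <;> rcases hxB with ⟨hb, -⟩ | ⟨-, hb⟩
    · exact absurd (ha.symm.trans hb) h1
    · left; exact Prod.ext ha hb
    · right; exact Prod.ext hb ha
    · exact absurd (hb.symm.trans ha) h2
  · rintro x (rfl | rfl) c ⟨-, hc⟩
    · exact hc (Or.inl rfl)
    · exact hc (Or.inr rfl)
end

section
/- Let H₁, H₂ be complex Hilbert spaces of dimension > 1, Lᵢ = P(Hᵢ) the lattices of closed subspaces (viewed as p-lattices on the projective spaces Σᵢ = (Hᵢ \ {0})/ℂ*), and L a complete atomistic ortho-lattice on Σ₁ × Σ₂ satisfying P1–P4 with Wᵢ = U(Hᵢ) (unitary groups). Then L is not orthomodular. -/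
open Set

open Projectivization

/-- The lattice of closed subspaces of a Hilbert space `H`, viewed as a p-lattice on the
projective space `ℙ ℂ H`. -/
def CLat (H : Type*) [NormedAddCommGroup H] [InnerProductSpace ℂ H] :
    Set (Set (Projectivization ℂ H)) :=
  {a | ∃ V : Submodule ℂ H, IsClosed (V : Set H) ∧
    a = {x : Projectivization ℂ H | x.submodule ≤ V}}

/-- The map induced on projective space by a unitary operator. -/
noncomputable def pmap {H : Type*} [NormedAddCommGroup H] [InnerProductSpace ℂ H]
    (u : H ≃ₗᵢ[ℂ] H) : Projectivization ℂ H → Projectivization ℂ H :=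
  Projectivization.map (u.toLinearEquiv : H →ₗ[ℂ] H) u.injective

/-!
Suppose `L` were orthomodular. Two points in different rows and different columns form the
intersection of two crosses, a closed set by P2, so the orthomodular law makes them orthogonal.
Hence, as `U(H₁)` is transitive on rays, the points of the column of `(w, m)` orthogonal to it
make up the intersection of the `U(H₁)`-translates of `(w, m)^⊥`; by P4 and P3 they form a closed
subspace of `H₂`, and likewise for rows. A closed subspace containing all rays but one contains
that one too (dimension `> 1`), so the row of `(w, m)` has a point `(z, m)`, `z ≠ w`, not
orthogonal to `(w, m)`. The orthomodular law for `{(w, m)} ⊆ univ ×ˢ {m}` then makes every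
`(z, n)`, `n ≠ m`, orthogonal to `(z, m)`; so the column set of `(z, m)` contains every ray but
`m`, hence `m`, contradicting irreflexivity.
-/

open Function Order
open scoped InnerProductSpace LinearAlgebra.Projectivization

section Polarity

variable {α : Type*} {R : α → α → Prop}

theorem pol_eq_lowerPolar (a : Set α) : pol R a = lowerPolar R a := rfl

theorem isExtent_pol (a : Set α) : IsExtent R (pol R a) := isExtent_lowerPolar

theorem IsOrthRel.irrefl (hR : IsOrthRel R) (p : α) : ¬ R p p := hR.1 p

theorem IsOrthRel.symm (hR : IsOrthRel R) {p q : α} (h : R p q) : R q p := hR.2.1 p q h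

theorem IsOrthRel.pol_pol_singleton (hR : IsOrthRel R) (p : α) : pol R (pol R {p}) = {p} :=
  hR.2.2 p

theorem IsOrthRel.pol_eq_upperPolar (hR : IsOrthRel R) (a : Set α) :
    pol R a = upperPolar R a :=
  Set.ext fun _ => ⟨fun h _ hp => hR.symm (h _ hp), fun h _ hp => hR.symm (h hp)⟩

theorem IsOrthRel.pol_pol_eq_self_iff (hR : IsOrthRel R) {a : Set α} :
    pol R (pol R a) = a ↔ IsExtent R a := by
  rw [isExtent_iff, hR.pol_eq_upperPolar a, pol_eq_lowerPolar]

theorem IsOrthRel.isExtent_singleton (hR : IsOrthRel R) (p : α) : IsExtent R {p} :=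
  hR.pol_pol_eq_self_iff.1 (hR.pol_pol_singleton p)

theorem IsOrthRel.pol_pol_pol (hR : IsOrthRel R) (a : Set α) :
    pol R (pol R (pol R a)) = pol R a :=
  hR.pol_pol_eq_self_iff.2 (isExtent_pol a)

/-- The orthomodular law `b = a ∨ (b ∧ a^⊥)` for `a ≤ b` in the lattice of `R`-closed sets. -/
def IsOrthomodular (R : α → α → Prop) : Prop :=
  ∀ a b, IsExtent R a → IsExtent R b → a ⊆ b → b = pol R (pol R (a ∪ (b ∩ pol R a)))

/-- Otherwise `{p, q} ∩ p^⊥ = ∅`, and the orthomodular law for `{p} ⊆ {p, q}` collapses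
`{p, q}` to `{p}`. -/
theorem IsOrthRel.rel_of_isExtent_pair (hR : IsOrthRel R) (hOM : IsOrthomodular R) {p q : α}
    (hpq : p ≠ q) (h : IsExtent R {p, q}) : R q p := by
  by_contra hqp
  have hdisj : {p, q} ∩ pol R {p} = ∅ := by
    ext x
    simp only [mem_inter_iff, mem_insert_iff, mem_singleton_iff, mem_empty_iff_false,
      iff_false, not_and]
    rintro (rfl | rfl) hx
    · exact hR.irrefl x (hx x rfl)
    · exact hqp (hx p rfl)
  have hjoin := hOM {p} {p, q} (hR.isExtent_singleton p) h (by simp)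
  rw [hdisj, union_empty, hR.pol_pol_singleton] at hjoin
  exact hpq (hjoin.subset (mem_insert_of_mem p (mem_singleton q))).symm

end Polarity

section Product

variable {α β : Type*} {R : α × β → α × β → Prop}

theorem cross_inter_cross {a c : α} {b d : β} (hac : a ≠ c) (hbd : b ≠ d) :
    ({a} ×ˢ univ ∪ univ ×ˢ {b}) ∩ ({c} ×ˢ univ ∪ univ ×ˢ {d}) = {(a, d), (c, b)} := by
  ext ⟨x, y⟩
  simp only [mem_inter_iff, mem_union, mem_prod, mem_singleton_iff, mem_univ, and_true,
    true_and, mem_insert_iff, Prod.mk.injEq]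
  constructor
  · rintro ⟨rfl | rfl, rfl | rfl⟩
    · exact absurd rfl hac
    · exact Or.inl ⟨rfl, rfl⟩
    · exact Or.inr ⟨rfl, rfl⟩
    · exact absurd rfl hbd
  · rintro (⟨rfl, rfl⟩ | ⟨rfl, rfl⟩)
    · exact ⟨Or.inl rfl, Or.inr rfl⟩
    · exact ⟨Or.inr rfl, Or.inl rfl⟩

/-- `{p, q}` is the intersection of two crosses. -/
theorem rel_of_fst_ne_of_snd_ne (hR : IsOrthRel R) (hOM : IsOrthomodular R)
    (hcross : ∀ a b, IsExtent R ({a} ×ˢ univ ∪ univ ×ˢ {b})) {p q : α × β}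
    (h1 : p.1 ≠ q.1) (h2 : p.2 ≠ q.2) : R p q := by
  obtain ⟨p1, p2⟩ := p
  obtain ⟨q1, q2⟩ := q
  have hpair := cross_inter_cross (a := q1) (b := p2) (c := p1) (d := q2) h1.symm h2
  refine hR.rel_of_isExtent_pair hOM (fun h => h1 (Prod.mk.inj h).1.symm) ?_
  exact hpair ▸ (hcross _ _).inter (hcross _ _)

variable (hR : IsOrthRel R) (hoff : ∀ p q : α × β, p.1 ≠ q.1 → p.2 ≠ q.2 → R p q)
include hR hoff

theorem univ_prod_setOf_rel_eq_iInter {ι : Type*} (f : ι → α → α) (hf : ∀ i, Bijective (f i))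
    (htrans : ∀ x y, ∃ i, f i x = y) (w : α) (m : β) :
    univ ×ˢ {k | R (w, k) (w, m)} = ⋂ i, Prod.map (f i) id '' pol R {(w, m)} := by
  ext ⟨x, k⟩
  simp only [mem_prod, mem_univ, true_and, mem_ofPred_eq, mem_iInter, mem_image, Prod.exists,
    Prod.map_apply, id_eq, Prod.mk.injEq]
  constructor
  · intro hk i
    obtain ⟨y, rfl⟩ := (hf i).2 x
    refine ⟨y, k, fun e he => ?_, rfl, rfl⟩
    rw [mem_singleton_iff.1 he]
    by_cases hy : y = w
    · exact hy ▸ hk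
    · exact hoff _ _ hy fun (hkm : k = m) => hR.irrefl _ (hkm ▸ hk)
  · intro h
    obtain ⟨i, hi⟩ := htrans w x
    obtain ⟨y, k', hy, hyx, rfl⟩ := h i
    obtain rfl : y = w := (hf i).1 (hyx.trans hi.symm)
    exact hy _ rfl

theorem setOf_rel_prod_univ_eq_iInter {ι : Type*} (g : ι → β → β) (hg : ∀ i, Bijective (g i))
    (htrans : ∀ x y, ∃ i, g i x = y) (w : α) (m : β) :
    {x | R (x, m) (w, m)} ×ˢ univ = ⋂ i, Prod.map id (g i) '' pol R {(w, m)} := by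
  ext ⟨x, k⟩
  simp only [mem_prod, mem_univ, and_true, mem_ofPred_eq, mem_iInter, mem_image, Prod.exists,
    Prod.map_apply, id_eq, Prod.mk.injEq]
  constructor
  · intro hx i
    obtain ⟨l, rfl⟩ := (hg i).2 k
    refine ⟨x, l, fun e he => ?_, rfl, rfl⟩
    rw [mem_singleton_iff.1 he]
    by_cases hl : l = m
    · exact hl ▸ hx
    · exact hoff _ _ (fun (hxw : x = w) => hR.irrefl _ (hxw ▸ hx)) hl
  · intro h
    obtain ⟨i, hi⟩ := htrans m k
    obtain ⟨x', l, hl, rfl, hlk⟩ := h i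
    obtain rfl : l = m := (hg i).1 (hlk.trans hi.symm)
    exact hl _ rfl

/-- By the orthomodular law for `{(w, m)} ⊆ univ ×ˢ {m}`, the row is the closure of `(w, m)`
and the points of the row orthogonal to it; `(z, n)` is orthogonal to all of these. -/
theorem rel_of_not_rel_of_isOrthomodular (hOM : IsOrthomodular R)
    {m : β} (hrow : IsExtent R (univ ×ˢ {m})) {w z : α} (hzw : z ≠ w) (hz : ¬ R (z, m) (w, m))
    {n : β} (hn : n ≠ m) : R (z, n) (z, m) := by
  have hjoin := hOM {(w, m)} (univ ×ˢ {m}) (hR.isExtent_singleton _) hrow (by simp)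
  have hperp : (z, n) ∈ pol R ({(w, m)} ∪ (univ ×ˢ {m} ∩ pol R {(w, m)})) := by
    rintro ⟨e, l⟩ (he | ⟨he, hem⟩)
    · rw [mem_singleton_iff.1 he]
      exact hoff _ _ hzw hn
    · obtain rfl : l = m := (mem_prod.1 he).2
      exact hoff _ _ (fun (hze : z = e) => hz (hze ▸ hem _ rfl)) hn
  rw [← hR.pol_pol_pol, ← hjoin] at hperp
  exact hperp (z, m) (by simp)

end Product

namespace Projectivization

variable {K V : Type*} [DivisionRing K] [AddCommGroup V] [Module K V]

theorem exists_notMem_submodule (hd : 1 < Module.rank K V) (p : ℙ K V) :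
    ∃ v, v ∉ p.submodule := by
  by_contra! h
  have htop : p.submodule = ⊤ := eq_top_iff.2 fun v _ => h v
  have hone : Module.rank K p.submodule = 1 := by
    rw [← Module.finrank_eq_rank, p.finrank_submodule, Nat.cast_one]
  rw [← rank_top K V, ← htop, hone] at hd
  exact lt_irrefl _ hd

/-- `p.rep = (v + p.rep) - v` for any `v ∉ p`, and neither `[v]` nor `[v + p.rep]` is `p`. -/
theorem submodule_le_of_forall_ne (hd : 1 < Module.rank K V) {W : Submodule K V} {p : ℙ K V}
    (h : ∀ q, q ≠ p → q.submodule ≤ W) : p.submodule ≤ W := by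
  have hmem : ∀ v, v ∉ p.submodule → v ∈ W := fun v hv => by
    have hv0 : v ≠ 0 := fun h0 => hv (h0 ▸ zero_mem _)
    have hne : mk K v hv0 ≠ p := fun he => hv (he ▸ by
      rw [submodule_mk]; exact Submodule.mem_span_singleton_self v)
    simpa [submodule_mk, Submodule.span_singleton_le_iff_mem] using h _ hne
  have hrep : p.rep ∈ p.submodule := p.submodule_eq ▸ Submodule.mem_span_singleton_self _
  obtain ⟨v, hv⟩ := exists_notMem_submodule hd p
  have hv' : v + p.rep ∉ p.submodule := fun h' => hv (by simpa using sub_mem h' hrep)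
  rw [submodule_eq, Submodule.span_singleton_le_iff_mem]
  simpa using sub_mem (hmem _ hv') (hmem _ hv)

end Projectivization

section Reflection

variable {𝕜 E : Type*} [RCLike 𝕜] [NormedAddCommGroup E] [InnerProductSpace 𝕜 E]

theorem Submodule.reflection_sub_of_inner_comm {v w : E} (hn : ‖v‖ = ‖w‖)
    (hi : ⟪v, w⟫_𝕜 = ⟪w, v⟫_𝕜) : reflection (𝕜 ∙ (v - w))ᗮ v = w := by
  set ρ : E ≃ₗᵢ[𝕜] E := reflection (𝕜 ∙ (v - w))ᗮ
  suffices ρ v + ρ v = w + w by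
    apply smul_right_injective E (two_ne_zero : (2 : 𝕜) ≠ 0)
    simpa [two_smul] using this
  have h₁ : ρ (v - w) = -(v - w) := reflection_orthogonalComplement_singleton_eq_neg (v - w)
  have h₂ : ρ (v + w) = v + w := by
    apply reflection_mem_subspace_eq_self
    rw [mem_orthogonal_singleton_iff_inner_left, inner_add_left, inner_sub_right,
      inner_sub_right, inner_self_eq_norm_sq_to_K, inner_self_eq_norm_sq_to_K, hn, hi]
    ring
  convert! congr_arg₂ (· + ·) h₂ h₁ using 1
  · simp
  · abel

/-- Reflect `v` onto the multiple `c • w` with `‖c • w‖ = ‖v‖` and `⟪v, c • w⟫` real. -/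
theorem exists_linearIsometryEquiv_apply_eq_smul (v : E) {w : E} (hw : w ≠ 0) :
    ∃ (u : E ≃ₗᵢ[𝕜] E) (c : 𝕜), u v = c • w := by
  obtain ⟨c, hc, hcz⟩ := RCLike.exists_norm_eq_mul_self ⟪v, w⟫_𝕜
  set r : ℝ := ‖v‖ / ‖w‖
  refine ⟨Submodule.reflection (𝕜 ∙ (v - ((r : 𝕜) * c) • w))ᗮ, r * c,
    Submodule.reflection_sub_of_inner_comm ?_ ?_⟩
  · rw [norm_smul, norm_mul, hc, mul_one, RCLike.norm_ofReal, abs_of_nonneg (by positivity),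
      div_mul_cancel₀ _ (norm_ne_zero_iff.2 hw)]
  · have hreal : ⟪v, ((r : 𝕜) * c) • w⟫_𝕜 = ((r * ‖⟪v, w⟫_𝕜‖ : ℝ) : 𝕜) := by
      rw [inner_smul_right, mul_assoc, ← hcz, RCLike.ofReal_mul]
    rw [hreal, ← inner_conj_symm ((_ : 𝕜) • w), hreal, RCLike.conj_ofReal]

end Reflection

section Hilbert

variable {H : Type*} [NormedAddCommGroup H] [InnerProductSpace ℂ H]

theorem empty_mem_CLat : (∅ : Set (ℙ ℂ H)) ∈ CLat H := by
  refine ⟨⊥, by simp, ?_⟩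
  ext x
  simp only [mem_empty_iff_false, mem_ofPred_eq, false_iff, le_bot_iff]
  intro hx
  have hrank := x.finrank_submodule
  rw [hx, finrank_bot] at hrank
  exact zero_ne_one hrank

theorem singleton_mem_CLat (p : ℙ ℂ H) : {p} ∈ CLat H := by
  refine ⟨p.submodule, Submodule.closed_of_finiteDimensional _, ?_⟩
  ext x
  simp only [mem_singleton_iff, mem_ofPred_eq]
  refine ⟨fun h => h ▸ le_rfl, fun h => Projectivization.submodule_injective ?_⟩
  exact Submodule.eq_of_le_of_finrank_eq h (by simp [Projectivization.finrank_submodule])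

theorem mem_of_forall_ne_of_mem_CLat (hd : 1 < Module.rank ℂ H) {s : Set (ℙ ℂ H)}
    (hs : s ∈ CLat H) {p : ℙ ℂ H} (h : ∀ q, q ≠ p → q ∈ s) : p ∈ s := by
  obtain ⟨V, -, rfl⟩ := hs
  exact Projectivization.submodule_le_of_forall_ne hd h

theorem pmap_mk (u : H ≃ₗᵢ[ℂ] H) (v : H) (hv : v ≠ 0) :
    pmap u (mk ℂ v hv) = mk ℂ (u v) (by simpa using hv) :=
  Projectivization.map_mk _ _ v hv

theorem pmap_refl : pmap (LinearIsometryEquiv.refl ℂ H) = id :=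
  Projectivization.map_id

theorem pmap_bijective (u : H ≃ₗᵢ[ℂ] H) : Bijective (pmap u) := by
  refine ⟨Projectivization.map_injective _ u.injective, fun x => ⟨pmap u.symm x, ?_⟩⟩
  induction x using Projectivization.ind with
  | h v hv => simp [pmap_mk]

theorem exists_pmap_eq (x y : ℙ ℂ H) : ∃ u, pmap u x = y := by
  induction x using Projectivization.ind with | h v hv =>
  induction y using Projectivization.ind with | h w hw =>
  obtain ⟨u, c, huv⟩ := exists_linearIsometryEquiv_apply_eq_smul (𝕜 := ℂ) v hw
  exact ⟨u, by rw [pmap_mk, mk_eq_mk_iff']; exact ⟨c, huv.symm⟩⟩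

end Hilbert

theorem stmt8_general
    {H1 H2 : Type} [NormedAddCommGroup H1] [InnerProductSpace ℂ H1]
    [NormedAddCommGroup H2] [InnerProductSpace ℂ H2]
    (hd1 : 1 < Module.rank ℂ H1) (hd2 : 1 < Module.rank ℂ H2)
    (R : Projectivization ℂ H1 × Projectivization ℂ H2 →
         Projectivization ℂ H1 × Projectivization ℂ H2 → Prop)
    (hR : IsOrthRel R)
    (L : Set (Set (Projectivization ℂ H1 × Projectivization ℂ H2)))
    (hL : L = {a | pol R (pol R a) = a})
    (hP2 : ∀ a1 ∈ CLat H1, ∀ a2 ∈ CLat H2,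
      (a1 ×ˢ (univ : Set (Projectivization ℂ H2))) ∪
        ((univ : Set (Projectivization ℂ H1)) ×ˢ a2) ∈ L)
    (hP3₁ : ∀ a1 : Set (Projectivization ℂ H1),
      a1 ×ˢ (univ : Set (Projectivization ℂ H2)) ∈ L → a1 ∈ CLat H1)
    (hP3₂ : ∀ a2 : Set (Projectivization ℂ H2),
      (univ : Set (Projectivization ℂ H1)) ×ˢ a2 ∈ L → a2 ∈ CLat H2)
    (hP4 : ∀ a ∈ L, ∀ (u1 : H1 ≃ₗᵢ[ℂ] H1) (u2 : H2 ≃ₗᵢ[ℂ] H2),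
      Prod.map (pmap u1) (pmap u2) '' a ∈ L) :
    -- `L` is not orthomodular
    ¬ (∀ a ∈ L, ∀ b ∈ L, a ⊆ b → b = pol R (pol R (a ∪ (b ∩ pol R a)))) := by
  subst hL
  intro hOM
  replace hOM : IsOrthomodular R := fun a b ha hb =>
    hOM a (hR.pol_pol_eq_self_iff.2 ha) b (hR.pol_pol_eq_self_iff.2 hb)
  have hcross (a1 : ℙ ℂ H1) (a2 : ℙ ℂ H2) : IsExtent R ({a1} ×ˢ univ ∪ univ ×ˢ {a2}) :=
    hR.pol_pol_eq_self_iff.1 (hP2 _ (singleton_mem_CLat a1) _ (singleton_mem_CLat a2))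
  have hrow (m : ℙ ℂ H2) : IsExtent R (univ ×ˢ {m}) := by
    simpa using hR.pol_pol_eq_self_iff.1 (hP2 _ empty_mem_CLat _ (singleton_mem_CLat m))
  have hoff (p q : ℙ ℂ H1 × ℙ ℂ H2) : p.1 ≠ q.1 → p.2 ≠ q.2 → R p q :=
    rel_of_fst_ne_of_snd_ne hR hOM hcross
  have htrans (u1 : H1 ≃ₗᵢ[ℂ] H1) (u2 : H2 ≃ₗᵢ[ℂ] H2) (p : ℙ ℂ H1 × ℙ ℂ H2) :
      IsExtent R (Prod.map (pmap u1) (pmap u2) '' pol R {p}) :=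
    hR.pol_pol_eq_self_iff.1 (hP4 _ (hR.pol_pol_pol _) u1 u2)
  have hcolSet (w : ℙ ℂ H1) (m : ℙ ℂ H2) : {k | R (w, k) (w, m)} ∈ CLat H2 := by
    refine hP3₂ _ (hR.pol_pol_eq_self_iff.2 ?_)
    rw [univ_prod_setOf_rel_eq_iInter hR hoff _ pmap_bijective exists_pmap_eq]
    exact IsExtent.iInter _ fun u => by simpa [pmap_refl] using htrans u (.refl ℂ H2) (w, m)
  have hrowSet (w : ℙ ℂ H1) (m : ℙ ℂ H2) : {x | R (x, m) (w, m)} ∈ CLat H1 := by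
    refine hP3₁ _ (hR.pol_pol_eq_self_iff.2 ?_)
    rw [setOf_rel_prod_univ_eq_iInter hR hoff _ pmap_bijective exists_pmap_eq]
    exact IsExtent.iInter _ fun u => by simpa [pmap_refl] using htrans (.refl ℂ H1) u (w, m)
  have := rank_pos_iff_nontrivial.1 (zero_lt_one.trans hd1)
  have := rank_pos_iff_nontrivial.1 (zero_lt_one.trans hd2)
  obtain ⟨w⟩ : Nonempty (ℙ ℂ H1) := inferInstance
  obtain ⟨m⟩ : Nonempty (ℙ ℂ H2) := inferInstance
  obtain ⟨z, hzw, hz⟩ : ∃ z, z ≠ w ∧ ¬ R (z, m) (w, m) := by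
    by_contra! h
    exact hR.irrefl _ (mem_of_forall_ne_of_mem_CLat hd1 (hrowSet w m) h)
  exact hR.irrefl _ (mem_of_forall_ne_of_mem_CLat hd2 (hcolSet z m)
    fun n hn => rel_of_not_rel_of_isOrthomodular hR hoff hOM (hrow m) hzw hz hn)

/-- (Theorem 1 of the paper, orthomodularity part.) For Hilbert spaces
`H₁, H₂` of dimension `> 1` and a cao-lattice `L` on `ℙH₁ × ℙH₂` (realized by an
orthogonality relation `⊥`) satisfying P1–P4 with `Wᵢ = U(Hᵢ)`, `L` is not orthomodular. -/
theorem stmt8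
    {H1 H2 : Type} [NormedAddCommGroup H1] [InnerProductSpace ℂ H1] [CompleteSpace H1]
    [NormedAddCommGroup H2] [InnerProductSpace ℂ H2] [CompleteSpace H2]
    (hd1 : 1 < Module.rank ℂ H1) (hd2 : 1 < Module.rank ℂ H2)
    (R : Projectivization ℂ H1 × Projectivization ℂ H2 →
         Projectivization ℂ H1 × Projectivization ℂ H2 → Prop)
    (hR : IsOrthRel R)
    (L : Set (Set (Projectivization ℂ H1 × Projectivization ℂ H2)))
    (hL : L = {a | pol R (pol R a) = a})
    (hP2 : ∀ a1 ∈ CLat H1, ∀ a2 ∈ CLat H2,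
      (a1 ×ˢ (univ : Set (Projectivization ℂ H2))) ∪
        ((univ : Set (Projectivization ℂ H1)) ×ˢ a2) ∈ L)
    (hP3₁ : ∀ a1 : Set (Projectivization ℂ H1),
      a1 ×ˢ (univ : Set (Projectivization ℂ H2)) ∈ L → a1 ∈ CLat H1)
    (hP3₂ : ∀ a2 : Set (Projectivization ℂ H2),
      (univ : Set (Projectivization ℂ H1)) ×ˢ a2 ∈ L → a2 ∈ CLat H2)
    (hP4 : ∀ a ∈ L, ∀ (u1 : H1 ≃ₗᵢ[ℂ] H1) (u2 : H2 ≃ₗᵢ[ℂ] H2),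
      Prod.map (pmap u1) (pmap u2) '' a ∈ L) :
    -- `L` is not orthomodular
    ¬ (∀ a ∈ L, ∀ b ∈ L, a ⊆ b → b = pol R (pol R (a ∪ (b ∩ pol R a)))) :=
  stmt8_general hd1 hd2 R hR L hL hP2 hP3₁ hP3₂ hP4
end

section
/- Let Σ₁, Σ₂ be sets with orthogonality relations and L₁, L₂ the associated p-lattices of biorthogonally closed sets, and let L be a p-lattice on Σ₁ × Σ₂ containing the atoms (P1). Then L satisfies P2 (i.e., (a₁×Σ₂)∪(Σ₁×a₂) ∈ L for all aᵢ ∈ Lᵢ) if and only if p^# ∈ L for every point p ∈ Σ₁×Σ₂, where p^# = (p₁^{⊥₁}×Σ₂) ∪ (Σ₁×p₂^{⊥₂}). -/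
open Set

lemma subset_pol_pol {α : Type*} (R : α → α → Prop) (hs : ∀ p q, R p q → R q p)
    (a : Set α) : a ⊆ pol R (pol R a) := fun p hp q hq => hs q p (hq p hp)

lemma pol_pol_pol {α : Type*} (R : α → α → Prop) (hs : ∀ p q, R p q → R q p)
    (a : Set α) : pol R (pol R (pol R a)) = pol R a := by
  apply Set.Subset.antisymm
  · intro q hq p hp
    exact hq p (subset_pol_pol R hs a hp)
  · exact subset_pol_pol R hs (pol R a)

/-- a p-lattice `L` on `Σ₁ × Σ₂` satisfies P2 if and only if `p^# ∈ L` for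
every point `p`. -/
theorem stmt11 {σ1 σ2 : Type*} (R1 : σ1 → σ1 → Prop) (R2 : σ2 → σ2 → Prop)
    (h1 : IsOrthRel R1) (h2 : IsOrthRel R2)
    (L : Set (Set (σ1 × σ2))) (hL : IsPLattice L) :
    (∀ a1 ∈ {a : Set σ1 | pol R1 (pol R1 a) = a},
      ∀ a2 ∈ {a : Set σ2 | pol R2 (pol R2 a) = a},
        (a1 ×ˢ (univ : Set σ2)) ∪ ((univ : Set σ1) ×ˢ a2) ∈ L) ↔
    (∀ p : σ1 × σ2, pol (sharp R1 R2) {p} ∈ L) := by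
  constructor
  · intro hP2 p
    have key : pol (sharp R1 R2) {p} =
        (pol R1 {p.1} ×ˢ (univ : Set σ2)) ∪ ((univ : Set σ1) ×ˢ pol R2 {p.2}) := by
      ext q
      simp only [pol, sharp, Set.mem_union, Set.mem_prod, Set.mem_univ, Set.mem_setOf_eq,
        Set.mem_singleton_iff, and_true, true_and]
      constructor
      · intro h
        rcases h p rfl with h | h
        · exact Or.inl (fun x hx => hx ▸ h)
        · exact Or.inr (fun x hx => hx ▸ h)
      · rintro (h | h) x hx
        · exact Or.inl (hx ▸ h p.1 rfl)
        · exact Or.inr (hx ▸ h p.2 rfl)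
    rw [key]
    exact hP2 _ (pol_pol_pol R1 h1.2.1 {p.1}) _ (pol_pol_pol R2 h2.2.1 {p.2})
  · intro hpt a1 ha1 a2 ha2
    simp only [Set.mem_setOf_eq] at ha1 ha2
    have key : (a1 ×ˢ (univ : Set σ2)) ∪ ((univ : Set σ1) ×ˢ a2) =
        ⋂₀ {s | ∃ q1 ∈ pol R1 a1, ∃ q2 ∈ pol R2 a2, s = pol (sharp R1 R2) {(q1, q2)}} := by
      ext p
      simp only [Set.mem_union, Set.mem_prod, Set.mem_univ, and_true, true_and,
        Set.mem_sInter, Set.mem_setOf_eq]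
      constructor
      · rintro (h | h) s ⟨q1, hq1, q2, hq2, rfl⟩
        · intro x hx
          rw [Set.mem_singleton_iff] at hx
          exact hx ▸ Or.inl (h1.2.1 _ _ (hq1 p.1 h))
        · intro x hx
          rw [Set.mem_singleton_iff] at hx
          exact hx ▸ Or.inr (h2.2.1 _ _ (hq2 p.2 h))
      · intro h
        by_contra hc
        push_neg at hc
        obtain ⟨hn1, hn2⟩ := hc
        rw [← ha1] at hn1
        rw [← ha2] at hn2
        simp only [pol, Set.mem_setOf_eq, not_forall] at hn1 hn2
        obtain ⟨q1, hq1, hr1⟩ := hn1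
        obtain ⟨q2, hq2, hr2⟩ := hn2
        have := h _ ⟨q1, hq1, q2, hq2, rfl⟩ (q1, q2) rfl
        rcases this with h' | h'
        · exact hr1 h'
        · exact hr2 h'
    rw [key]
    apply hL.2.2.1
    rintro s ⟨q1, _, q2, _, rfl⟩
    exact hpt (q1, q2)
end

section
/- Let ⊥ be an anti-reflexive symmetric binary relation on Σ = Σ₁ × Σ₂, where Σ₁, Σ₂ carry orthogonality relations ⊥₁, ⊥₂ with associated relation # on Σ. If p^{#⊥⊥} ⊆ p^# for every point p ∈ Σ, then ⊥ is an orthogonality relation on Σ (i.e., {p}^{⊥⊥} = {p} for all p). -/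
open Set

/-- if `⊥` is an anti-reflexive symmetric relation on `Σ₁ × Σ₂` such that
`p^{#⊥⊥} ⊆ p^#` for every point `p`, then `⊥` is an orthogonality relation. -/
theorem stmt12 {σ1 σ2 : Type*} (R1 : σ1 → σ1 → Prop) (R2 : σ2 → σ2 → Prop)
    (h1 : IsOrthRel R1) (h2 : IsOrthRel R2)
    (R : σ1 × σ2 → σ1 × σ2 → Prop)
    (hirr : ∀ p, ¬ R p p) (hsymm : ∀ p q, R p q → R q p)
    (hsub : ∀ p : σ1 × σ2,
      pol R (pol R (pol (sharp R1 R2) {p})) ⊆ pol (sharp R1 R2) {p}) :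
    IsOrthRel R := by
  obtain ⟨hi1, hs1, hc1⟩ := h1
  obtain ⟨hi2, hs2, hc2⟩ := h2
  refine ⟨hirr, hsymm, fun p => ?_⟩
  apply Set.Subset.antisymm
  · intro x hx
    -- key: x lies in q^# whenever p does
    have key : ∀ q, sharp R1 R2 p q → sharp R1 R2 x q := by
      intro q hpq
      have hmem : x ∈ pol (sharp R1 R2) {q} := by
        apply hsub q
        intro r hr
        apply hx
        intro s hs
        rw [Set.mem_singleton_iff] at hs; rw [hs]
        exact hr p (fun t ht => by rw [Set.mem_singleton_iff] at ht; subst ht; exact hpq)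
      exact hmem q rfl
    have hn1 : ¬ R1 x.1 p.1 := fun h =>
      (key x (Or.inl (hs1 _ _ h))).elim (hi1 x.1) (hi2 x.2)
    have hn2 : ¬ R2 x.2 p.2 := fun h =>
      (key x (Or.inr (hs2 _ _ h))).elim (hi1 x.1) (hi2 x.2)
    have he1 : x.1 = p.1 := by
      have hmem : x.1 ∈ pol R1 (pol R1 {p.1}) := by
        intro r hr
        have hrp : R1 r p.1 := hr p.1 rfl
        rcases key (r, p.2) (Or.inl (hs1 _ _ hrp)) with h | h
        · exact h
        · exact absurd h hn2
      rw [hc1 p.1] at hmem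
      exact hmem
    have he2 : x.2 = p.2 := by
      have hmem : x.2 ∈ pol R2 (pol R2 {p.2}) := by
        intro r hr
        have hrp : R2 r p.2 := hr p.2 rfl
        rcases key (p.1, r) (Or.inr (hs2 _ _ hrp)) with h | h
        · exact absurd h hn1
        · exact h
      rw [hc2 p.2] at hmem
      exact hmem
    exact Prod.ext he1 he2
  · intro x hx
    rw [Set.mem_singleton_iff] at hx; subst hx
    intro r hr
    exact hsymm r x (hr x rfl)
end

section
/- Let Σ₁ = Σ₂ = P(ℂ²) projective line (unit rays in ℂ²) with the usual orthogonality ⊥. For a ray q let C(q) := {r : |⟨Q,R⟩| = √3/2 for unit vectors Q ∈ q, R ∈ r}. Define on Σ = Σ₁×Σ₂ the relation p ⊥₂ q ⇔ p # q or (q₁ ∈ C(p₁) and q₂ ∈ C(p₂)), where p # q ⇔ p₁ ⊥ q₁ or p₂ ⊥ q₂. Then ⊥₂ is an orthogonality relation on Σ: it is anti-reflexive, symmetric, and {p}^{⊥₂⊥₂} = {p} for every p. -/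
open Set

noncomputable section

open Projectivization

/-- The projective line of `ℂ²`. -/
abbrev PC2 := Projectivization ℂ (EuclideanSpace ℂ (Fin 2))

/-- The usual orthogonality of rays in `ℂ²`. -/
def perp (p q : PC2) : Prop := (inner ℂ p.rep q.rep : ℂ) = 0

/-- `C(q) = {r : |⟨Q,R⟩| = √3/2 for unit vectors Q ∈ q, R ∈ r}`. -/
def Cset (q : PC2) : Set PC2 :=
  {r | ‖(inner ℂ q.rep r.rep : ℂ)‖ = Real.sqrt 3 / 2 * (‖q.rep‖ * ‖r.rep‖)}

/-- The relation `⊥₂` on `Σ = Σ₁ × Σ₂`: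
`p ⊥₂ q ⇔ p # q or (q₁ ∈ C(p₁) and q₂ ∈ C(p₂))`. -/
def perp2 (p q : PC2 × PC2) : Prop :=
  sharp perp perp p q ∨ (q.1 ∈ Cset p.1 ∧ q.2 ∈ Cset p.2)

/-!
Anti-reflexivity and symmetry of `⊥₂` are inherited from those of `⊥` and of the relation
`r ∈ C(q)`, which is anti-reflexive because `√3/2 < 1`. For `{p}^{⊥₂⊥₂} = {p}`, let `q ⊥₂ r`
for every `r ⊥₂ p`, and choose a ray `s ⊥ p₁`. Then `r = (s, q₂) ⊥₂ p`, so `q ⊥₂ r`; since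
`q₂ ⊥ q₂` and `q₂ ∈ C(q₂)` are impossible, this forces `q₁ ⊥ s`, and in `ℂ²` the only ray
orthogonal to `s` is `p₁`. Symmetrically `q₂ = p₂`.
-/

open Module

theorem exists_ne_zero_inner_eq_zero {𝕜 E : Type*} [RCLike 𝕜] [NormedAddCommGroup E]
    [InnerProductSpace 𝕜 E] (h : 1 < finrank 𝕜 E) (v : E) : ∃ w ≠ 0, inner 𝕜 v w = 0 := by
  have : FiniteDimensional 𝕜 E := finite_of_finrank_pos (by omega)
  have hK : (𝕜 ∙ v)ᗮ ≠ ⊥ := by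
    rw [Ne, Submodule.orthogonal_eq_bot_iff]
    exact (span_lt_top_of_card_lt_finrank (s := {v}) (by simpa using h)).ne
  obtain ⟨w, hw, hw0⟩ := Submodule.exists_mem_ne_zero_of_ne_bot hK
  exact ⟨w, hw0, Submodule.mem_orthogonal_singleton_iff_inner_right.1 hw⟩

instance : Fact (finrank ℂ (EuclideanSpace ℂ (Fin 2)) = 2) := ⟨finrank_euclideanSpace_fin⟩

theorem perp_irrefl (p : PC2) : ¬ perp p p := inner_self_ne_zero.2 p.rep_nonzero

theorem perp.symm {p q : PC2} (h : perp p q) : perp q p := inner_eq_zero_symm.1 h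

theorem exists_perp (p : PC2) : ∃ r, perp p r := by
  obtain ⟨w, hw, hpw⟩ :=
    exists_ne_zero_inner_eq_zero (by rw [finrank_euclideanSpace_fin]; norm_num) p.rep
  obtain ⟨a, ha⟩ := (mk_eq_mk_iff' ℂ _ w (mk ℂ w hw).rep_nonzero hw).1 (mk_rep _)
  refine ⟨mk ℂ w hw, ?_⟩
  rw [perp, ← ha, inner_smul_right, hpw, mul_zero]

theorem eq_of_perp_of_perp {p q r : PC2} (hp : perp p r) (hq : perp q r) : p = q := by
  obtain ⟨a, ha⟩ := Submodule.mem_span_singleton.1 <|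
    Submodule.mem_span_singleton_of_inner_eq_zero_of_inner_eq_zero r.rep_nonzero q.rep_nonzero
      (inner_eq_zero_symm.1 hp) (inner_eq_zero_symm.1 hq)
  rw [← mk_rep p, ← mk_rep q, mk_eq_mk_iff']
  exact ⟨a, ha⟩

theorem self_notMem_Cset (p : PC2) : p ∉ Cset p := by
  have hp : 0 < ‖p.rep‖ := norm_pos_iff.2 p.rep_nonzero
  have hsqrt : Real.sqrt 3 < 2 := by
    rw [Real.sqrt_lt' two_pos]
    norm_num
  intro h
  rw [Cset, mem_ofPred_eq, inner_self_eq_norm_sq_to_K, norm_pow, RCLike.norm_ofReal,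
    abs_of_pos hp, sq] at h
  nlinarith [mul_pos hp hp]

theorem mem_Cset_symm {p q : PC2} (h : q ∈ Cset p) : p ∈ Cset q := by
  rw [Cset, mem_ofPred_eq, norm_inner_symm, mul_comm ‖q.rep‖]
  exact h

theorem perp2_irrefl (p : PC2 × PC2) : ¬ perp2 p p := by
  rintro ((h | h) | ⟨h, -⟩)
  · exact perp_irrefl _ h
  · exact perp_irrefl _ h
  · exact self_notMem_Cset _ h

theorem perp2.symm {p q : PC2 × PC2} (h : perp2 p q) : perp2 q p := by
  rcases h with (h | h) | ⟨h₁, h₂⟩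
  · exact Or.inl (Or.inl h.symm)
  · exact Or.inl (Or.inr h.symm)
  · exact Or.inr ⟨mem_Cset_symm h₁, mem_Cset_symm h₂⟩

theorem eq_of_forall_perp2_imp {p q : PC2 × PC2} (h : ∀ r, perp2 r p → perp2 q r) : q = p := by
  obtain ⟨s₁, hs₁⟩ := exists_perp p.1
  obtain ⟨s₂, hs₂⟩ := exists_perp p.2
  refine Prod.ext ?_ ?_
  · rcases h (s₁, q.2) (Or.inl (Or.inl hs₁.symm)) with (h | h) | ⟨-, h⟩
    · exact eq_of_perp_of_perp h hs₁
    · exact absurd h (perp_irrefl _)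
    · exact absurd h (self_notMem_Cset _)
  · rcases h (q.1, s₂) (Or.inl (Or.inr hs₂.symm)) with (h | h) | ⟨h, -⟩
    · exact absurd h (perp_irrefl _)
    · exact eq_of_perp_of_perp h hs₂
    · exact absurd h (self_notMem_Cset _)

/-- `⊥₂` is an orthogonality relation on `Σ₁ × Σ₂`. -/
theorem stmt14 : IsOrthRel perp2 := by
  refine ⟨perp2_irrefl, fun _ _ => perp2.symm, fun p => eq_singleton_iff_unique_mem.2 ⟨?_, ?_⟩⟩
  · exact fun r hr => perp2.symm (hr p rfl)
  · exact fun q hq => eq_of_forall_perp2_imp fun r hr => hq r fun _ hx => hx ▸ hr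

end
end

section
/- Let Σ₁ be a set with orthogonality relation ⊥₁ such that each point p of Σ₁ has a unique point orthogonal to it, denoted p^⊥ (as when Σ₁ = P(ℂ²)), and let f : Σ₁ → Σ₁ be a bijection satisfying: (i) f ≠ id; (ii) f⁻¹(p^{⊥₁}) = f(p)^{⊥₁} for all p (where f acts pointwise on subsets); (iii) f(p) ≠ p^⊥ for all p. Define on Σ = Σ₁×Σ₁ the relation p ⊥₅ q ⇔ (f×f)(p) # q, where # is the separated-product relation. Then ⊥₅ is an orthogonality relation on Σ, the lattice L⁵ = {a : a^{⊥₅⊥₅} = a} equals the separated product L₁⊘L₁ as a set of subsets, but ⊥₅ violates P5: there exist p, q with p₁ ⊥₁ q₁ but not p ⊥₅ q. -/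
open Set

/-- The relation `⊥₅` on `Σ₁ × Σ₁`: `p ⊥₅ q ⇔ (f×f)(p) # q`. -/
def perp5 {σ : Type*} (R1 : σ → σ → Prop) (f : σ → σ) (p q : σ × σ) : Prop :=
  R1 (f p.1) q.1 ∨ R1 (f p.2) q.2

/-- (Proposition 5 of the paper, abstract form.) Suppose every point of `Σ₁`
has a unique orthogonal point `pc p`, and `f` is a bijection of `Σ₁` with (i) `f ≠ id`,
(ii) `f⁻¹(p^{⊥₁}) = f(p)^{⊥₁}`, (iii) `f(p) ≠ pc p`. Then `⊥₅` is an orthogonality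
relation on `Σ₁ × Σ₁`, the lattice `L⁵` of `⊥₅`-biorthogonally closed sets coincides with
the separated product `L₁⊘L₁`, but `⊥₅` violates P5. -/
theorem stmt16 {σ : Type*} (R1 : σ → σ → Prop) (h1 : IsOrthRel R1)
    (pc : σ → σ) (hpc : ∀ p q : σ, R1 p q ↔ q = pc p)
    (f : Equiv σ σ) (hfi : (f : σ → σ) ≠ id)
    (hfii : ∀ p : σ, (f : σ → σ) ⁻¹' (pol R1 {p}) = pol R1 {f p})
    (hfiii : ∀ p : σ, f p ≠ pc p) :
    IsOrthRel (perp5 R1 f) ∧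
    {a : Set (σ × σ) | pol (perp5 R1 f) (pol (perp5 R1 f) a) = a} =
      {a : Set (σ × σ) | pol (sharp R1 R1) (pol (sharp R1 R1) a) = a} ∧
    ∃ p q : σ × σ, R1 p.1 q.1 ∧ ¬ perp5 R1 f p q := by
  obtain ⟨hirr, hsym, _⟩ := h1
  have hR : ∀ p : σ, R1 p (pc p) := fun p => (hpc p (pc p)).mpr rfl
  have hinv : ∀ p : σ, pc (pc p) = p := fun p => ((hpc (pc p) p).mp (hsym _ _ (hR p))).symm
  have hne : ∀ p : σ, pc p ≠ p := by
    intro p h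
    exact hirr p ((hpc p p).mpr h.symm)
  have hpcinj : ∀ p q : σ, pc p = pc q → p = q := by
    intro p q h
    have := congrArg pc h
    rwa [hinv, hinv] at this
  have hpolset : ∀ p : σ, pol R1 {p} = {pc p} := by
    intro p
    ext q
    simp only [pol, Set.mem_setOf_eq, Set.mem_singleton_iff, forall_eq, hpc]
    constructor
    · intro h; rw [h, hinv]
    · intro h; rw [h, hinv]
  have hkey : ∀ p : σ, f (pc (f p)) = pc p := by
    intro p
    have h := hfii p
    rw [hpolset, hpolset] at h
    have : pc (f p) ∈ (f : σ → σ) ⁻¹' {pc p} := by rw [h]; rfl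
    simpa using this
  set g : σ → σ := fun x => pc (f x) with hg
  have hfg : ∀ x, f (g x) = pc x := hkey
  have hgg : ∀ x, g (g x) = x := by
    intro x
    show pc (f (pc (f x))) = x
    rw [hkey, hinv]
  have hperp : ∀ p q : σ × σ, perp5 R1 f p q ↔ (q.1 = g p.1 ∨ q.2 = g p.2) := by
    intro p q
    simp only [perp5, hpc]
    exact Iff.rfl
  have hgne : ∀ x : σ, g x ≠ x := by
    intro x h
    apply hfiii x
    have := congrArg f h.symm
    rw [hfg] at this
    exact this
  have hsymm5 : ∀ p q : σ × σ, perp5 R1 f p q → perp5 R1 f q p := by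
    intro p q h
    rw [hperp] at h ⊢
    rcases h with h | h
    · left; rw [h, hgg]
    · right; rw [h, hgg]
  have horth : IsOrthRel (perp5 R1 f) := by
    refine ⟨?_, hsymm5, ?_⟩
    · intro p h
      rw [hperp] at h
      rcases h with h | h
      · exact hgne p.1 h.symm
      · exact hgne p.2 h.symm
    · intro p
      ext r
      simp only [pol, Set.mem_setOf_eq, Set.mem_singleton_iff, forall_eq]
      constructor
      · intro hr
        have h1' := hr (g p.1, pc (g r.2)) (by rw [hperp]; left; simp [hgg])
        have h2' := hr (pc (g r.1), g p.2) (by rw [hperp]; right; simp [hgg])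
        rw [hperp] at h1' h2'
        have e1 : p.1 = r.1 := by
          rcases h1' with h | h
          · have : g (g p.1) = g (g r.1) := congrArg g h
            rwa [hgg, hgg] at this
          · exact absurd h (hne (g r.2))
        have e2 : p.2 = r.2 := by
          rcases h2' with h | h
          · exact absurd h (hne (g r.1))
          · have : g (g p.2) = g (g r.2) := congrArg g h
            rwa [hgg, hgg] at this
        exact Prod.ext e1.symm e2.symm
      · intro h q hq
        subst h
        exact hsymm5 q r hq
  have hdp : ∀ a : Set (σ × σ),
      pol (perp5 R1 f) (pol (perp5 R1 f) a) = pol (sharp R1 R1) (pol (sharp R1 R1) a) := by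
    intro a
    have hshr : ∀ p q : σ × σ, sharp R1 R1 p q ↔ (q.1 = pc p.1 ∨ q.2 = pc p.2) := by
      intro p q; simp only [sharp, hpc]
    ext q
    simp only [pol, Set.mem_setOf_eq]
    constructor
    · intro H p hp
      have hp' : ∀ r ∈ a, perp5 R1 f (f.symm p.1, f.symm p.2) r := by
        intro r hr
        rw [hperp]
        have := hshr p r |>.mp (hp r hr)
        simp only [hg, Equiv.apply_symm_apply]
        exact this
      have := (hperp q _).mp (H _ hp')
      rw [hshr]
      simp only [hg] at this
      rcases this with h | h
      · left
        have := congrArg f h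
        rw [Equiv.apply_symm_apply, hkey] at this
        exact this
      · right
        have := congrArg f h
        rw [Equiv.apply_symm_apply, hkey] at this
        exact this
    · intro H p hp
      have hp' : ∀ r ∈ a, sharp R1 R1 (f p.1, f p.2) r := by
        intro r hr
        rw [hshr]
        have := (hperp p r).mp (hp r hr)
        simpa only [hg] using this
      have := (hshr q _).mp (H _ hp')
      rw [hperp]
      simp only [hg]
      rcases this with h | h
      · left
        apply f.injective
        rw [hkey]
        exact h
      · right
        apply f.injective
        rw [hkey]
        exact h
  refine ⟨horth, ?_, ?_⟩
  · ext a
    simp only [Set.mem_setOf_eq, hdp]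
  · obtain ⟨x, hx⟩ : ∃ x, f x ≠ x := by
      by_contra h
      push_neg at h
      exact hfi (funext h)
    refine ⟨(x, x), (pc x, x), (hpc x (pc x)).mpr rfl, ?_⟩
    rw [hperp]
    push_neg
    constructor
    · intro h
      exact hx (hpcinj _ _ h.symm)
    · intro h
      apply hfiii x
      have h2 := congrArg pc h
      simp only [hg, hinv] at h2
      exact h2.symm
end

section
/- With L₀ := {V ∩ Σ : V subspace of ℂ²⊗ℂ²} on the set Σ of product states in P(ℂ²⊗ℂ²): L₀ is a p-lattice (contains ∅, Σ, all singletons, and is closed under arbitrary intersections), but L₀ admits no ortho-complementation: there is no map ': L₀ → L₀ that is order-reversing, involutive, and satisfies a ∧ a' = ∅ and a ∨ a' = Σ for all a ∈ L₀. -/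
open Set

noncomputable section

open Projectivization TensorProduct

/-- `L₀ = {V ∩ Σ : V a subspace of ℂ² ⊗ ℂ²}` on the set `Σ` of product states. -/
def L0 : Set (Set (PC2 × PC2)) :=
  {a | ∃ W : Submodule ℂ (EuclideanSpace ℂ (Fin 2) ⊗[ℂ] EuclideanSpace ℂ (Fin 2)),
    a = {x : PC2 × PC2 | x.1.rep ⊗ₜ[ℂ] x.2.rep ∈ W}}

/-!
An orthocomplementation `'` of `L₀` is an antitone involution, so it maps the members of `L₀`
above `d'` injectively into those below `d`. For the two product states `pᵢ = (eᵢ, eᵢ)` the set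
`d = {p₀, p₁}` lies in `L₀`, and below it there are only `∅`, `{p₀}`, `{p₁}`, `d`, whose images are
`Σ`, `{p₀}'`, `{p₁}'`, `d'`. But `{p₀}'` misses `p₀`, so it spans a proper subspace of `ℂ² ⊗ ℂ²`,
and the strictly smaller `d'` spans a subspace of dimension at most `2`. Adding to that subspace a
product state lying outside both `{p₀}'` and `{p₁}'` gives a fifth member of `L₀` above `d'`.
-/

lemma eq_univ_or_eq_compl_of_compl_pair_subset {α : Type*} {L : Set (Set α)}
    {c : Set α → Set α} (hmem : ∀ a ∈ L, c a ∈ L) (hanti : ∀ a ∈ L, ∀ b ∈ L, a ⊆ b → c b ⊆ c a)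
    (hinv : ∀ a ∈ L, c (c a) = a) (hdisj : ∀ a ∈ L, a ∩ c a = ∅) (huniv : univ ∈ L)
    {x y : α} (hxy : {x, y} ∈ L) {K : Set α} (hK : K ∈ L) (hsub : c {x, y} ⊆ K) :
    K = univ ∨ K = c {x} ∨ K = c {y} ∨ K = c {x, y} := by
  have hcK : c K ⊆ {x, y} := hinv _ hxy ▸ hanti _ (hmem _ hxy) _ hK hsub
  have hc_empty : c ∅ = univ := by
    have : c univ = ∅ := by simpa using hdisj _ huniv
    rw [← this, hinv _ huniv]
  rw [← hinv K hK]
  rcases subset_pair_iff_eq.1 hcK with h | h | h | h <;> simp [h, hc_empty]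

section TensorProduct

variable {K M N : Type*} [Field K] [AddCommGroup M] [Module K M] [AddCommGroup N] [Module K N]

lemma Projectivization.eq_iff_rep_mem_span {p q : Projectivization K M} :
    p = q ↔ p.rep ∈ K ∙ q.rep := by
  conv_lhs => rw [← p.mk_rep, ← q.mk_rep]
  rw [mk_eq_mk_iff', Submodule.mem_span_singleton]

lemma TensorProduct.tmul_ne_zero {m : M} {n : N} (hm : m ≠ 0) (hn : n ≠ 0) :
    m ⊗ₜ[K] n ≠ 0 := by
  obtain ⟨φ, hφ⟩ := Module.Projective.exists_dual_ne_zero K hn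
  intro h
  have := congrArg (fun t => TensorProduct.rid K M (φ.lTensor M t)) h
  simp only [LinearMap.lTensor_tmul, TensorProduct.rid_tmul, map_zero] at this
  exact hm ((smul_eq_zero.1 this).resolve_left hφ)

lemma TensorProduct.left_mem_span_singleton_of_tmul_mem {m m' : M} {n n' : N} (hn : n ≠ 0)
    (h : m ⊗ₜ[K] n ∈ K ∙ (m' ⊗ₜ[K] n')) : m ∈ K ∙ m' := by
  obtain ⟨φ, hφ⟩ := Module.Projective.exists_dual_ne_zero K hn
  obtain ⟨a, ha⟩ := Submodule.mem_span_singleton.1 h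
  have hcontract : (a * φ n') • m' = φ n • m := by
    simpa [mul_smul] using congrArg (fun t => TensorProduct.rid K M (φ.lTensor M t)) ha
  rw [← Submodule.smul_mem_iff _ hφ, ← hcontract]
  exact Submodule.smul_mem _ _ (Submodule.mem_span_singleton_self m')

lemma TensorProduct.right_mem_span_singleton_of_tmul_mem {m m' : M} {n n' : N} (hm : m ≠ 0)
    (h : m ⊗ₜ[K] n ∈ K ∙ (m' ⊗ₜ[K] n')) : n ∈ K ∙ n' := by
  obtain ⟨a, ha⟩ := Submodule.mem_span_singleton.1 h
  refine left_mem_span_singleton_of_tmul_mem (n' := m') hm (Submodule.mem_span_singleton.2 ⟨a, ?_⟩)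
  simpa using congrArg (TensorProduct.comm K M N) ha

lemma Projectivization.eq_of_rep_tmul_mem_span {x y : Projectivization K M × Projectivization K N}
    (h : x.1.rep ⊗ₜ[K] x.2.rep ∈ K ∙ (y.1.rep ⊗ₜ[K] y.2.rep)) : x = y :=
  Prod.ext
    (eq_iff_rep_mem_span.2 (TensorProduct.left_mem_span_singleton_of_tmul_mem x.2.rep_nonzero h))
    (eq_iff_rep_mem_span.2 (TensorProduct.right_mem_span_singleton_of_tmul_mem x.1.rep_nonzero h))

end TensorProduct

lemma TensorProduct.exists_tmul_notMem_of_ne_top {R M N : Type*} [CommRing R] [AddCommGroup M]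
    [Module R M] [AddCommGroup N] [Module R N] {V₁ V₂ : Submodule R (M ⊗[R] N)}
    (h₁ : V₁ ≠ ⊤) (h₂ : V₂ ≠ ⊤) : ∃ m n, m ⊗ₜ[R] n ∉ V₁ ∧ m ⊗ₜ[R] n ∉ V₂ := by
  by_contra! hcover
  -- A group is not the union of two proper subgroups: apply this to every slice `m ⊗ -`, and then
  -- to the `m` whose slice lies in `Vᵢ`.
  let T (V : Submodule R (M ⊗[R] N)) : Submodule R M :=
    ⨅ n, V.comap ((TensorProduct.mk R M N).flip n)
  have eq_top_of_T_eq_top {V} (hV : T V = ⊤) : V = ⊤ := by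
    rw [eq_top_iff, ← span_tmul_eq_top, Submodule.span_le]
    rintro _ ⟨m, n, rfl⟩
    exact Submodule.mem_iInf _ |>.1 (hV ▸ Submodule.mem_top (x := m)) n
  have hT : ((⊤ : Submodule R M) : Set M) ⊆ T V₁ ∪ T V₂ := by
    intro m _
    have hm : ((⊤ : Submodule R N) : Set N) ⊆
        V₁.comap (TensorProduct.mk R M N m) ∪ V₂.comap (TensorProduct.mk R M N m) :=
      fun n _ => (em (m ⊗ₜ n ∈ V₁)).imp id (hcover m n)
    rcases AddSubgroupClass.subset_union.1 hm with h | h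
    · exact Or.inl (Submodule.mem_iInf _ |>.2 fun n => h Submodule.mem_top)
    · exact Or.inr (Submodule.mem_iInf _ |>.2 fun n => h Submodule.mem_top)
  rcases AddSubgroupClass.subset_union.1 hT with h | h
  · exact h₁ (eq_top_of_T_eq_top (top_le_iff.1 h))
  · exact h₂ (eq_top_of_T_eq_top (top_le_iff.1 h))

local notation "ℂ²" => EuclideanSpace ℂ (Fin 2)

def prodVec (x : PC2 × PC2) : ℂ² ⊗[ℂ] ℂ² := x.1.rep ⊗ₜ[ℂ] x.2.rep

def prodStates (V : Submodule ℂ (ℂ² ⊗[ℂ] ℂ²)) : Set (PC2 × PC2) := {x | prodVec x ∈ V}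

def spanProd (a : Set (PC2 × PC2)) : Submodule ℂ (ℂ² ⊗[ℂ] ℂ²) := Submodule.span ℂ (prodVec '' a)

lemma prodVec_ne_zero (x : PC2 × PC2) : prodVec x ≠ 0 :=
  TensorProduct.tmul_ne_zero x.1.rep_nonzero x.2.rep_nonzero

lemma finrank_tensor : Module.finrank ℂ (ℂ² ⊗[ℂ] ℂ²) = 4 := by
  simp [Module.finrank_tensorProduct]

lemma gc_spanProd_prodStates : GaloisConnection spanProd prodStates :=
  Set.image_preimage.compose (Submodule.gi ℂ _).gc

lemma prodStates_spanProd {a : Set (PC2 × PC2)} (ha : a ∈ L0) : prodStates (spanProd a) = a := by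
  obtain ⟨V, rfl⟩ := ha
  exact gc_spanProd_prodStates.u_l_u_eq_u V

lemma prodStates_span_singleton (x : PC2 × PC2) : prodStates (ℂ ∙ prodVec x) = {x} :=
  Set.eq_singleton_iff_unique_mem.2
    ⟨Submodule.mem_span_singleton_self _, fun _ hy => Projectivization.eq_of_rep_tmul_mem_span hy⟩

lemma prodVec_mk_mem_iff {V : Submodule ℂ (ℂ² ⊗[ℂ] ℂ²)} {m n : ℂ²} (hm : m ≠ 0) (hn : n ≠ 0) :
    prodVec (mk ℂ m hm, mk ℂ n hn) ∈ V ↔ m ⊗ₜ[ℂ] n ∈ V := by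
  obtain ⟨a, ha⟩ := exists_smul_eq_mk_rep ℂ m hm
  obtain ⟨b, hb⟩ := exists_smul_eq_mk_rep ℂ n hn
  rw [prodVec, ← ha, ← hb, Units.smul_def, Units.smul_def, smul_tmul_smul,
    Submodule.smul_mem_iff _ (mul_ne_zero a.ne_zero b.ne_zero)]

lemma exists_prodVec_notMem {V₁ V₂ : Submodule ℂ (ℂ² ⊗[ℂ] ℂ²)} (h₁ : V₁ ≠ ⊤) (h₂ : V₂ ≠ ⊤) :
    ∃ x, prodVec x ∉ V₁ ∧ prodVec x ∉ V₂ := by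
  obtain ⟨m, n, hm₁, hm₂⟩ := TensorProduct.exists_tmul_notMem_of_ne_top h₁ h₂
  have hm : m ≠ 0 := by rintro rfl; simp at hm₁
  have hn : n ≠ 0 := by rintro rfl; simp at hm₁
  exact ⟨(mk ℂ m hm, mk ℂ n hn), by simpa only [prodVec_mk_mem_iff] using ⟨hm₁, hm₂⟩⟩

lemma prodStates_ne_univ {V : Submodule ℂ (ℂ² ⊗[ℂ] ℂ²)} (hV : V ≠ ⊤) : prodStates V ≠ univ := by
  obtain ⟨x, hx, -⟩ := exists_prodVec_notMem hV hV
  exact fun h => hx (h.ge (mem_univ x))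

lemma isPLattice_L0 : IsPLattice L0 := by
  refine ⟨⟨⊥, ?_⟩, ⟨⊤, ?_⟩, fun S hS => ⟨⨅ a ∈ S, spanProd a, ?_⟩,
    fun x => ⟨_, (prodStates_span_singleton x).symm⟩⟩
  · ext x
    simpa [prodVec] using prodVec_ne_zero x
  · ext x
    simp
  · change _ = prodStates _
    rw [gc_spanProd_prodStates.u_iInf₂, sInter_eq_biInter]
    exact (iInter₂_congr fun a ha => (prodStates_spanProd (hS ha)).symm)

def basisPt (i : Fin 2) : PC2 := mk ℂ (EuclideanSpace.single i 1) (by simp)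

lemma eq_basisPt_iff (p : PC2) (i : Fin 2) : p = basisPt i ↔ ∀ j ≠ i, p.rep j = 0 := by
  rw [eq_iff_rep_mem_span, ← submodule_eq, basisPt, submodule_mk, Submodule.mem_span_singleton]
  constructor
  · rintro ⟨a, ha⟩ j hj
    simp [← ha, hj]
  · exact fun h => ⟨p.rep i, by ext j; by_cases hj : j = i <;> simp [hj, h]⟩

lemma basisPt_rep_mul_rep (k : Fin 2) {i j : Fin 2} (hij : i ≠ j) :
    (basisPt k).rep i * (basisPt k).rep j = 0 := by
  have h := (eq_basisPt_iff (basisPt k) k).1 rfl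
  by_cases hi : i = k
  · rw [h j (hi ▸ hij.symm), mul_zero]
  · rw [h i hi, zero_mul]

def tensorBasis : Module.Basis (Fin 2 × Fin 2) ℂ (ℂ² ⊗[ℂ] ℂ²) :=
  (PiLp.basisFun 2 ℂ (Fin 2)).tensorProduct (PiLp.basisFun 2 ℂ (Fin 2))

lemma tensorBasis_repr_tmul (m n : ℂ²) (i j : Fin 2) :
    tensorBasis.repr (m ⊗ₜ n) (i, j) = m i * n j := by
  simp [tensorBasis, mul_comm]

lemma coords_eq_zero_of_cross_mul_eq_zero {a b : ℂ²} (ha : a ≠ 0) (hb : b ≠ 0)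
    (h₀₁ : a 0 * b 1 = 0) (h₁₀ : a 1 * b 0 = 0) :
    (a 1 = 0 ∧ b 1 = 0) ∨ (a 0 = 0 ∧ b 0 = 0) := by
  have hne : ∀ v : ℂ², v ≠ 0 → v 0 ≠ 0 ∨ v 1 ≠ 0 := fun v hv => by
    by_contra! h
    exact hv (by ext i; fin_cases i <;> simp [h])
  rw [mul_eq_zero] at h₀₁ h₁₀
  have := hne a ha
  have := hne b hb
  tauto

lemma prodStates_span_pair :
    prodStates (Submodule.span ℂ
      {prodVec (basisPt 0, basisPt 0), prodVec (basisPt 1, basisPt 1)}) =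
      {(basisPt 0, basisPt 0), (basisPt 1, basisPt 1)} := by
  refine Subset.antisymm (fun x hx => ?_) (insert_subset_iff.2
    ⟨Submodule.subset_span (mem_insert _ _),
      singleton_subset_iff.2 (Submodule.subset_span (mem_insert_of_mem _ rfl))⟩)
  obtain ⟨α, β, h⟩ := Submodule.mem_span_pair.1 hx
  have hcoord : ∀ i j, i ≠ j → x.1.rep i * x.2.rep j = 0 := fun i j hij => by
    have := congrArg (fun t => tensorBasis.repr t (i, j)) h
    simpa only [prodVec, map_add, map_smul, Finsupp.add_apply, Finsupp.smul_apply,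
      tensorBasis_repr_tmul, basisPt_rep_mul_rep _ hij, smul_zero, add_zero] using this.symm
  rcases coords_eq_zero_of_cross_mul_eq_zero x.1.rep_nonzero x.2.rep_nonzero
    (hcoord 0 1 (by decide)) (hcoord 1 0 (by decide)) with ⟨h₁, h₂⟩ | ⟨h₁, h₂⟩
  · left
    ext <;> simp [eq_basisPt_iff, Fin.forall_fin_two, h₁, h₂]
  · right
    ext <;> simp [eq_basisPt_iff, Fin.forall_fin_two, h₁, h₂]

lemma basisPt_zero_ne_one : basisPt 0 ≠ basisPt 1 := by
  intro h
  have h₁ := (eq_basisPt_iff _ 0).1 rfl 1 (by decide)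
  have h₀ := (eq_basisPt_iff _ 1).1 h 0 (by decide)
  exact (basisPt 0).rep_nonzero (by ext i; fin_cases i <;> simp [h₀, h₁])

lemma exists_prodStates_not_subset {a : Set (PC2 × PC2)}
    (ha : Module.finrank ℂ (spanProd a) ≤ 2) {V₁ V₂ : Submodule ℂ (ℂ² ⊗[ℂ] ℂ²)}
    (h₁ : V₁ ≠ ⊤) (h₂ : V₂ ≠ ⊤) :
    ∃ V, V ≠ ⊤ ∧ a ⊆ prodStates V ∧
      ¬ prodStates V ⊆ prodStates V₁ ∧ ¬ prodStates V ⊆ prodStates V₂ := by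
  obtain ⟨x, hx₁, hx₂⟩ := exists_prodVec_notMem h₁ h₂
  have hx : x ∈ prodStates (spanProd a ⊔ ℂ ∙ prodVec x) :=
    Submodule.mem_sup_right (Submodule.mem_span_singleton_self _)
  refine ⟨spanProd a ⊔ ℂ ∙ prodVec x, fun htop => ?_,
    (gc_spanProd_prodStates.le_u_l a).trans (gc_spanProd_prodStates.monotone_u le_sup_left),
    fun h => hx₁ (h hx), fun h => hx₂ (h hx)⟩
  have := Submodule.finrank_add_le_finrank_add_finrank (spanProd a) (ℂ ∙ prodVec x)
  rw [htop, finrank_top, finrank_tensor, finrank_span_singleton (prodVec_ne_zero x)] at this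
  omega

lemma L0_no_disjoint_antitone_involution (c : Set (PC2 × PC2) → Set (PC2 × PC2))
    (hmem : ∀ a ∈ L0, c a ∈ L0) (hanti : ∀ a ∈ L0, ∀ b ∈ L0, a ⊆ b → c b ⊆ c a)
    (hinv : ∀ a ∈ L0, c (c a) = a) (hdisj : ∀ a ∈ L0, a ∩ c a = ∅) : False := by
  set p : Fin 2 → PC2 × PC2 := fun i => (basisPt i, basisPt i)
  have hd : {p 0, p 1} ∈ L0 := ⟨_, prodStates_span_pair.symm⟩
  have hpt (i : Fin 2) : {p i} ∈ L0 := isPLattice_L0.2.2.2 (p i)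
  have hsub_pt (i : Fin 2) : c {p 0, p 1} ⊆ c {p i} :=
    hanti _ (hpt i) _ hd (by fin_cases i <;> simp)
  have hproper (i : Fin 2) : spanProd (c {p i}) ≠ ⊤ := fun htop => by
    have : p i ∈ c {p i} := by
      rw [← prodStates_spanProd (hmem _ (hpt i)), htop]
      trivial
    simpa using (hdisj _ (hpt i)).subset ⟨rfl, this⟩
  have hlt : spanProd (c {p 0, p 1}) < spanProd (c {p 0}) := by
    refine lt_of_le_of_ne (gc_spanProd_prodStates.monotone_l (hsub_pt 0)) fun h => ?_
    have : ({p 0, p 1} : Set (PC2 × PC2)) = {p 0} := by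
      rw [← hinv _ hd, ← hinv _ (hpt 0), ← prodStates_spanProd (hmem _ hd), h,
        prodStates_spanProd (hmem _ (hpt 0))]
    have : p 1 = p 0 := by simpa using this.subset (mem_insert_of_mem _ rfl)
    exact basisPt_zero_ne_one (congrArg Prod.fst this).symm
  have hdim : Module.finrank ℂ (spanProd (c {p 0, p 1})) ≤ 2 := by
    have := Submodule.finrank_lt_finrank_of_lt hlt
    have := finrank_tensor ▸ Submodule.finrank_lt (hproper 0)
    omega
  obtain ⟨V, hV, hsub, h₀, h₁⟩ := exists_prodStates_not_subset hdim (hproper 0) (hproper 1)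
  rw [prodStates_spanProd (hmem _ (hpt _))] at h₀ h₁
  rcases eq_univ_or_eq_compl_of_compl_pair_subset hmem hanti hinv hdisj isPLattice_L0.2.1 hd
    ⟨V, rfl⟩ hsub with h | h | h | h
  · exact prodStates_ne_univ hV h
  · exact h₀ h.le
  · exact h₁ h.le
  · exact h₀ (h.le.trans (hsub_pt 0))

/-- `L₀` is a p-lattice, but it admits no ortho-complementation: no map
`' : L₀ → L₀` is order-reversing, involutive, and satisfies `a ∧ a' = ∅` and
`a ∨ a' = Σ` (the join being the intersection of all members of `L₀` containing the
union). -/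
theorem stmt19 :
    IsPLattice L0 ∧
    ¬ ∃ c : Set (PC2 × PC2) → Set (PC2 × PC2),
      (∀ a ∈ L0, c a ∈ L0) ∧
      (∀ a ∈ L0, ∀ b ∈ L0, a ⊆ b → c b ⊆ c a) ∧
      (∀ a ∈ L0, c (c a) = a) ∧
      (∀ a ∈ L0, a ∩ c a = ∅) ∧
      (∀ a ∈ L0, cl L0 (a ∪ c a) = univ) := by
  refine ⟨isPLattice_L0, ?_⟩
  rintro ⟨c, hmem, hanti, hinv, hdisj, -⟩
  exact L0_no_disjoint_antitone_involution c hmem hanti hinv hdisj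

end
end
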